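/- Let N₀ > 0 be real, let z ∈ ℂ, ν ∈ [0, 1/N₀] and 0 < b < 1, and assume there is C < 1 such that |1 − tz| ≤ C for all t ∈ [b, 1]. Let θ = arctan(π/|log C|). If m ≥ 1 is an integer with m·θ + 2π/N₀ ≤ π/2, then the real part of (log(1−tz))^m · (1−tz)^{−2ν} does not change sign as t ranges over [b,1] (it is either ≥ 0 for all such t or ≤ 0 for all such t), and likewise its imaginary part does not change sign on [b,1]. -/

import Mathlib

/-!
Write `w = 1 - t z`. Since `‖w‖ ≤ C < 1`, the number `-log w` has real part `-log ‖w‖ ≥ |log C|`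
and imaginary part `-arg w ∈ [-π, π]`, so its argument is at most `θ = arctan (π / |log C|)` in
absolute value. Hence `(-1)^m (log w)^m w^(-2ν) = exp (m log (-log w) - 2ν log w)` has phase
`m arg (-log w) - 2ν arg w`, bounded by `m θ + 2νπ ≤ π/2` in absolute value, so its real part is
nonnegative; both summands of the phase have the sign opposite to `arg w`, which for `t > 0` has
the sign of `-Im z`, so the imaginary part has a fixed sign as well.
-/

open Real

theorem Real.abs_arctan_le_arctan {x K : ℝ} (h : |x| ≤ K) : |arctan x| ≤ arctan K := by
  obtain ⟨hlo, hhi⟩ := abs_le.1 h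
  rw [abs_le, ← arctan_neg]
  exact ⟨arctan_strictMono.monotone hlo, arctan_strictMono.monotone hhi⟩

theorem forall_nonneg_or_forall_nonpos_of_nonneg_mul {α : Type*} {s : Set α} {f : α → ℝ}
    {c : ℝ} (hc : c ≠ 0) (h : ∀ t ∈ s, 0 ≤ c * f t) :
    (∀ t ∈ s, 0 ≤ f t) ∨ ∀ t ∈ s, f t ≤ 0 := by
  rcases hc.lt_or_gt with hc | hc
  · exact Or.inr fun t ht => nonpos_of_mul_nonneg_right (h t ht) hc
  · exact Or.inl fun t ht => nonneg_of_mul_nonneg_right (h t ht) hc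

namespace Complex

theorem arg_eq_arctan_of_re_pos {u : ℂ} (hu : 0 < u.re) : arg u = Real.arctan (u.im / u.re) := by
  obtain ⟨hlo, hhi⟩ := abs_lt.1 (abs_arg_lt_pi_div_two_iff.2 (Or.inl hu))
  rw [← tan_arg, Real.arctan_tan hlo hhi]

theorem re_exp_nonneg {z : ℂ} (h : |z.im| ≤ π / 2) : 0 ≤ (exp z).re := by
  rw [exp_re]
  exact mul_nonneg (Real.exp_pos _).le (Real.cos_nonneg_of_mem_Icc (abs_le.1 h))

theorem im_exp_nonneg {z : ℂ} (h₀ : 0 ≤ z.im) (hπ : z.im ≤ π) : 0 ≤ (exp z).im := by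
  rw [exp_im]
  exact mul_nonneg (Real.exp_pos _).le (Real.sin_nonneg_of_nonneg_of_le_pi h₀ hπ)

theorem im_exp_nonpos {z : ℂ} (h₀ : z.im ≤ 0) (hπ : -π ≤ z.im) : (exp z).im ≤ 0 := by
  rw [exp_im]
  exact mul_nonpos_of_nonneg_of_nonpos (Real.exp_pos _).le
    (Real.sin_nonpos_of_nonpos_of_neg_pi_le h₀ hπ)

section UnitDisk

variable {w : ℂ}

theorem log_re_neg_of_norm_lt_one (hw₀ : w ≠ 0) (hw₁ : ‖w‖ < 1) : (log w).re < 0 := by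
  rw [log_re]
  exact Real.log_neg (norm_pos_iff.2 hw₀) hw₁

theorem neg_log_ne_zero_of_norm_lt_one (hw₀ : w ≠ 0) (hw₁ : ‖w‖ < 1) : -log w ≠ 0 := by
  rw [neg_ne_zero]
  intro h
  simpa [h] using log_re_neg_of_norm_lt_one hw₀ hw₁

theorem arg_neg_log (hw₀ : w ≠ 0) (hw₁ : ‖w‖ < 1) :
    arg (-log w) = Real.arctan (arg w / Real.log ‖w‖) := by
  have hre : 0 < (-log w).re := by
    rw [neg_re]
    exact neg_pos.2 (log_re_neg_of_norm_lt_one hw₀ hw₁)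
  rw [arg_eq_arctan_of_re_pos hre, neg_re, neg_im, log_re, log_im, neg_div_neg_eq]

theorem abs_arg_neg_log_le {C : ℝ} (hC : C < 1) (hw₀ : w ≠ 0) (hwC : ‖w‖ ≤ C) :
    |arg (-log w)| ≤ Real.arctan (π / |Real.log C|) := by
  have hw : 0 < ‖w‖ := norm_pos_iff.2 hw₀
  have hlogw : Real.log ‖w‖ < 0 := Real.log_neg hw (hwC.trans_lt hC)
  have hlogC : Real.log C < 0 := Real.log_neg (hw.trans_le hwC) hC
  rw [arg_neg_log hw₀ (hwC.trans_lt hC)]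
  refine Real.abs_arctan_le_arctan ?_
  rw [abs_div]
  refine div_le_div₀ pi_pos.le (abs_arg_le_pi w) (abs_pos.2 hlogC.ne) ?_
  rw [abs_of_neg hlogC, abs_of_neg hlogw]
  exact neg_le_neg (Real.log_le_log hw hwC)

theorem arg_neg_log_nonpos (hw₀ : w ≠ 0) (hw₁ : ‖w‖ < 1) (h : 0 ≤ arg w) :
    arg (-log w) ≤ 0 := by
  rw [arg_neg_log hw₀ hw₁, arctan_le_zero]
  exact div_nonpos_of_nonneg_of_nonpos h (Real.log_neg (norm_pos_iff.2 hw₀) hw₁).le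

theorem arg_neg_log_nonneg (hw₀ : w ≠ 0) (hw₁ : ‖w‖ < 1) (h : arg w ≤ 0) :
    0 ≤ arg (-log w) := by
  rw [arg_neg_log hw₀ hw₁, arctan_nonneg]
  exact div_nonneg_of_nonpos h (Real.log_neg (norm_pos_iff.2 hw₀) hw₁).le

theorem neg_one_pow_mul_log_pow_mul_cpow (hw₀ : w ≠ 0) (hw₁ : ‖w‖ < 1) (m : ℕ) (s : ℂ) :
    (((-1) ^ m : ℝ) : ℂ) * (log w ^ m * w ^ s) = exp (m * log (-log w) + log w * s) := by
  rw [exp_add, exp_nat_mul, exp_log (neg_log_ne_zero_of_norm_lt_one hw₀ hw₁),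
    ← cpow_def_of_ne_zero hw₀, neg_pow]
  push_cast
  ring

theorem im_natCast_mul_log_neg_log_add_log_mul_ofReal (m : ℕ) (σ : ℝ) :
    ((m : ℂ) * log (-log w) + log w * σ).im = m * arg (-log w) + σ * arg w := by
  simp only [add_im, mul_im, natCast_re, natCast_im, ofReal_re, ofReal_im, log_im]
  ring

variable {m : ℕ} {σ C : ℝ}

theorem abs_natCast_mul_arg_neg_log_add_mul_arg_le (hσ : σ ≤ 0) (hC : C < 1) (hw₀ : w ≠ 0)
    (hwC : ‖w‖ ≤ C) :
    |m * arg (-log w) + σ * arg w| ≤ m * Real.arctan (π / |Real.log C|) - σ * π := by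
  calc |m * arg (-log w) + σ * arg w|
      ≤ |(m : ℝ)| * |arg (-log w)| + |σ| * |arg w| := by
        rw [← abs_mul, ← abs_mul]; exact abs_add_le _ _
    _ ≤ m * Real.arctan (π / |Real.log C|) + -σ * π := by
        rw [Nat.abs_cast, abs_of_nonpos hσ]
        gcongr
        · exact abs_arg_neg_log_le hC hw₀ hwC
        · linarith
        · exact abs_arg_le_pi w
    _ = m * Real.arctan (π / |Real.log C|) - σ * π := by ring

theorem natCast_mul_arg_neg_log_add_mul_arg_nonpos (hσ : σ ≤ 0) (hw₀ : w ≠ 0) 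
    (hw₁ : ‖w‖ < 1) (h : 0 ≤ arg w) :
    m * arg (-log w) + σ * arg w ≤ 0 :=
  add_nonpos (mul_nonpos_of_nonneg_of_nonpos m.cast_nonneg (arg_neg_log_nonpos hw₀ hw₁ h))
    (mul_nonpos_of_nonpos_of_nonneg hσ h)

theorem natCast_mul_arg_neg_log_add_mul_arg_nonneg (hσ : σ ≤ 0) (hw₀ : w ≠ 0) 
    (hw₁ : ‖w‖ < 1) (h : arg w ≤ 0) :
    0 ≤ m * arg (-log w) + σ * arg w :=
  add_nonneg (mul_nonneg m.cast_nonneg (arg_neg_log_nonneg hw₀ hw₁ h))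
    (mul_nonneg_of_nonpos_of_nonpos hσ h)

theorem neg_one_pow_mul_re_log_pow_mul_cpow_nonneg (hm : m ≠ 0) (hσ : σ ≤ 0) (hC : C < 1)
    (hwC : ‖w‖ ≤ C) (hθ : m * Real.arctan (π / |Real.log C|) - σ * π ≤ π / 2) :
    0 ≤ (-1) ^ m * (log w ^ m * w ^ (σ : ℂ)).re := by
  rcases eq_or_ne w 0 with rfl | hw₀
  · simp [hm]
  rw [← re_ofReal_mul, neg_one_pow_mul_log_pow_mul_cpow hw₀ (hwC.trans_lt hC)]
  refine re_exp_nonneg ?_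
  rw [im_natCast_mul_log_neg_log_add_log_mul_ofReal]
  exact (abs_natCast_mul_arg_neg_log_add_mul_arg_le hσ hC hw₀ hwC).trans hθ

theorem neg_one_pow_mul_im_log_pow_mul_cpow_nonpos (hm : m ≠ 0) (hσ : σ ≤ 0) (hC : C < 1)
    (hwC : ‖w‖ ≤ C) (hθ : m * Real.arctan (π / |Real.log C|) - σ * π ≤ π / 2)
    (harg : 0 ≤ arg w) :
    (-1) ^ m * (log w ^ m * w ^ (σ : ℂ)).im ≤ 0 := by
  rcases eq_or_ne w 0 with rfl | hw₀
  · simp [hm]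
  rw [← im_ofReal_mul, neg_one_pow_mul_log_pow_mul_cpow hw₀ (hwC.trans_lt hC)]
  have hbound := (abs_natCast_mul_arg_neg_log_add_mul_arg_le (m := m) hσ hC hw₀ hwC).trans hθ
  refine im_exp_nonpos ?_ ?_ <;> rw [im_natCast_mul_log_neg_log_add_log_mul_ofReal]
  · exact natCast_mul_arg_neg_log_add_mul_arg_nonpos hσ hw₀ (hwC.trans_lt hC) harg
  · linarith [(abs_le.1 hbound).1, pi_pos]

theorem neg_one_pow_mul_im_log_pow_mul_cpow_nonneg (hm : m ≠ 0) (hσ : σ ≤ 0) (hC : C < 1)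
    (hwC : ‖w‖ ≤ C) (hθ : m * Real.arctan (π / |Real.log C|) - σ * π ≤ π / 2)
    (harg : arg w ≤ 0) :
    0 ≤ (-1) ^ m * (log w ^ m * w ^ (σ : ℂ)).im := by
  rcases eq_or_ne w 0 with rfl | hw₀
  · simp [hm]
  rw [← im_ofReal_mul, neg_one_pow_mul_log_pow_mul_cpow hw₀ (hwC.trans_lt hC)]
  have hbound := (abs_natCast_mul_arg_neg_log_add_mul_arg_le (m := m) hσ hC hw₀ hwC).trans hθ
  refine im_exp_nonneg ?_ ?_ <;> rw [im_natCast_mul_log_neg_log_add_log_mul_ofReal]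
  · exact natCast_mul_arg_neg_log_add_mul_arg_nonneg hσ hw₀ (hwC.trans_lt hC) harg
  · linarith [(abs_le.1 hbound).2, pi_pos]

end UnitDisk

end Complex

theorem log_pow_cpow_re_im_sign_const_general (N₀ : ℝ) (z : ℂ)
    (ν : ℝ) (hν : ν ∈ Set.Icc 0 (1 / N₀)) (b C : ℝ) (hb0 : 0 < b)
    (hC : C < 1) (hbound : ∀ t ∈ Set.Icc b 1, ‖1 - (t : ℂ) * z‖ ≤ C)
    (m : ℕ) (hm : 1 ≤ m)
    (hθ : (m : ℝ) * Real.arctan (π / |Real.log C|) + 2 * π / N₀ ≤ π / 2) :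
    ((∀ t ∈ Set.Icc b 1,
        0 ≤ ((Complex.log (1 - (t : ℂ) * z)) ^ m *
              (1 - (t : ℂ) * z) ^ ((-(2 * ν) : ℝ) : ℂ)).re) ∨
      (∀ t ∈ Set.Icc b 1,
        ((Complex.log (1 - (t : ℂ) * z)) ^ m *
          (1 - (t : ℂ) * z) ^ ((-(2 * ν) : ℝ) : ℂ)).re ≤ 0)) ∧
    ((∀ t ∈ Set.Icc b 1,
        0 ≤ ((Complex.log (1 - (t : ℂ) * z)) ^ m *
              (1 - (t : ℂ) * z) ^ ((-(2 * ν) : ℝ) : ℂ)).im) ∨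
      (∀ t ∈ Set.Icc b 1,
        ((Complex.log (1 - (t : ℂ) * z)) ^ m *
          (1 - (t : ℂ) * z) ^ ((-(2 * ν) : ℝ) : ℂ)).im ≤ 0)) := by
  obtain ⟨hν₀, hν₁⟩ := hν
  have hσ : -(2 * ν) ≤ 0 := by linarith
  have hθ' : m * Real.arctan (π / |Real.log C|) - -(2 * ν) * π ≤ π / 2 := by
    have h : 2 * ν * π ≤ 2 * π * (1 / N₀) := by nlinarith [pi_pos]
    rw [mul_one_div] at h
    linarith
  have hm₀ : m ≠ 0 := by omega
  have hsign : (-1 : ℝ) ^ m ≠ 0 := pow_ne_zero m (by norm_num)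
  refine ⟨forall_nonneg_or_forall_nonpos_of_nonneg_mul hsign fun t ht =>
    Complex.neg_one_pow_mul_re_log_pow_mul_cpow_nonneg hm₀ hσ hC (hbound t ht) hθ', ?_⟩
  have him (t : ℝ) : (1 - (t : ℂ) * z).im = -(t * z.im) := by simp
  rcases le_or_gt z.im 0 with hz | hz
  · refine forall_nonneg_or_forall_nonpos_of_nonneg_mul (neg_ne_zero.2 hsign) fun t ht => ?_
    have harg : 0 ≤ Complex.arg (1 - (t : ℂ) * z) := by
      rw [Complex.arg_nonneg_iff, him, neg_nonneg]
      exact mul_nonpos_of_nonneg_of_nonpos (hb0.le.trans ht.1) hz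
    rw [neg_mul, neg_nonneg]
    exact Complex.neg_one_pow_mul_im_log_pow_mul_cpow_nonpos hm₀ hσ hC (hbound t ht) hθ' harg
  · refine forall_nonneg_or_forall_nonpos_of_nonneg_mul hsign fun t ht => ?_
    have harg : Complex.arg (1 - (t : ℂ) * z) < 0 := by
      rw [Complex.arg_neg_iff, him, neg_lt_zero]
      exact mul_pos (hb0.trans_le ht.1) hz
    exact Complex.neg_one_pow_mul_im_log_pow_mul_cpow_nonneg hm₀ hσ hC (hbound t ht) hθ' harg.le

/-- Let `N₀ > 0`, `z ∈ ℂ`, `ν ∈ [0, 1/N₀]`, `0 < b < 1`, and suppose `|1 − tz| ≤ C < 1` for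
all `t ∈ [b,1]`. Set `θ = arctan(π/|log C|)`. If `m ≥ 1` is an integer with
`m·θ + 2π/N₀ ≤ π/2`, then the real and imaginary parts of
`(log(1−tz))^m · (1−tz)^{−2ν}` do not change sign as `t` ranges over `[b,1]`. -/
theorem log_pow_cpow_re_im_sign_const (N₀ : ℝ) (hN₀ : 0 < N₀) (z : ℂ)
    (ν : ℝ) (hν : ν ∈ Set.Icc 0 (1 / N₀)) (b C : ℝ) (hb0 : 0 < b) (hb1 : b < 1)
    (hC : C < 1) (hbound : ∀ t ∈ Set.Icc b 1, ‖1 - (t : ℂ) * z‖ ≤ C)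
    (m : ℕ) (hm : 1 ≤ m)
    (hθ : (m : ℝ) * Real.arctan (π / |Real.log C|) + 2 * π / N₀ ≤ π / 2) :
    ((∀ t ∈ Set.Icc b 1,
        0 ≤ ((Complex.log (1 - (t : ℂ) * z)) ^ m *
              (1 - (t : ℂ) * z) ^ ((-(2 * ν) : ℝ) : ℂ)).re) ∨
      (∀ t ∈ Set.Icc b 1,
        ((Complex.log (1 - (t : ℂ) * z)) ^ m *
          (1 - (t : ℂ) * z) ^ ((-(2 * ν) : ℝ) : ℂ)).re ≤ 0)) ∧
    ((∀ t ∈ Set.Icc b 1,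
        0 ≤ ((Complex.log (1 - (t : ℂ) * z)) ^ m *
              (1 - (t : ℂ) * z) ^ ((-(2 * ν) : ℝ) : ℂ)).im) ∨
      (∀ t ∈ Set.Icc b 1,
        ((Complex.log (1 - (t : ℂ) * z)) ^ m *
          (1 - (t : ℂ) * z) ^ ((-(2 * ν) : ℝ) : ℂ)).im ≤ 0)) :=
  log_pow_cpow_re_im_sign_const_general N₀ z ν hν b C hb0 hC hbound m hm hθ
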